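/- arXiv:1101.3756 — 3 statements merged into one kernel-verified Lean document; each statement's English description precedes it below -/
import Mathlib

section
/- Let f : ℂ \ {-1,1} → ℂ be defined by f(z) = z/(√(z+1)·√(z-1)), using the principal branch of the complex square root. Then f restricted to ℂ \ [-1,1] is even: for every z ∈ ℂ with z ∉ [-1,1] (the real segment), f(-z) = f(z). -/
/-! Since `-z + 1 = -(z - 1)` and `-z - 1 = -(z + 1)`, evenness amounts to the denominator changing
sign under `w ↦ -w` applied to both factors. Negating `w` shifts `arg w` by `+π` or by `-π`, so it
multiplies `√w` by `i` or by `-i`. Off the segment, `z - 1` and `z + 1` get the same shift (both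
lie in the closed lower half-plane minus `(-∞, 0]`, or both in its complement), so the denominator
is multiplied by `i² = (-i)² = -1`. -/

open Complex Real

noncomputable def csqrt (w : ℂ) : ℂ := w ^ ((1 : ℂ) / 2)

noncomputable def f (z : ℂ) : ℂ := z / (csqrt (z + 1) * csqrt (z - 1))

namespace Complex

variable {w : ℂ}

theorem neg_cpow_of_arg_neg_eq_add_pi (h : arg (-w) = arg w + π) (s : ℂ) :
    (-w) ^ s = exp (π * I * s) * w ^ s := by
  have hw : w ≠ 0 := by rintro rfl; exact pi_ne_zero (by simpa using h.symm)
  have hlog : log (-w) = log w + π * I := by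
    rw [log, log, norm_neg, h]; push_cast; ring
  rw [cpow_def_of_ne_zero (neg_ne_zero.2 hw), cpow_def_of_ne_zero hw, hlog, ← exp_add]
  ring_nf

theorem neg_cpow_of_arg_neg_eq_sub_pi (h : arg (-w) = arg w - π) (s : ℂ) :
    (-w) ^ s = exp (-(π * I * s)) * w ^ s := by
  have hw : w ≠ 0 := by rintro rfl; simp at h
  have hlog : log (-w) = log w - π * I := by
    rw [log, log, norm_neg, h]; push_cast; ring
  rw [cpow_def_of_ne_zero (neg_ne_zero.2 hw), cpow_def_of_ne_zero hw, hlog, ← exp_add]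
  ring_nf

end Complex

theorem csqrt_neg_of_arg_neg_eq_add_pi {w : ℂ} (h : arg (-w) = arg w + π) :
    csqrt (-w) = I * csqrt w := by
  rw [csqrt, neg_cpow_of_arg_neg_eq_add_pi h, show (π : ℂ) * I * (1 / 2) = π / 2 * I by ring,
    exp_pi_div_two_mul_I, csqrt]

theorem csqrt_neg_of_arg_neg_eq_sub_pi {w : ℂ} (h : arg (-w) = arg w - π) :
    csqrt (-w) = -I * csqrt w := by
  rw [csqrt, neg_cpow_of_arg_neg_eq_sub_pi h, Complex.exp_neg,
    show (π : ℂ) * I * (1 / 2) = π / 2 * I by ring, exp_pi_div_two_mul_I, inv_I, csqrt]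

theorem csqrt_neg_mul_csqrt_neg {a b : ℂ}
    (h : (arg (-a) = arg a + π ∧ arg (-b) = arg b + π) ∨
      (arg (-a) = arg a - π ∧ arg (-b) = arg b - π)) :
    csqrt (-a) * csqrt (-b) = -(csqrt a * csqrt b) := by
  rcases h with ⟨ha, hb⟩ | ⟨ha, hb⟩
  · rw [csqrt_neg_of_arg_neg_eq_add_pi ha, csqrt_neg_of_arg_neg_eq_add_pi hb]
    linear_combination csqrt a * csqrt b * I_sq
  · rw [csqrt_neg_of_arg_neg_eq_sub_pi ha, csqrt_neg_of_arg_neg_eq_sub_pi hb]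
    linear_combination csqrt a * csqrt b * I_sq

theorem arg_neg_sub_one_add_one_of_notMem_segment {z : ℂ}
    (hz : ¬ (z.im = 0 ∧ z.re ∈ Set.Icc (-1 : ℝ) 1)) :
    (arg (-(z - 1)) = arg (z - 1) + π ∧ arg (-(z + 1)) = arg (z + 1) + π) ∨
      (arg (-(z - 1)) = arg (z - 1) - π ∧ arg (-(z + 1)) = arg (z + 1) - π) := by
  simp only [arg_neg_eq_arg_add_pi_iff, arg_neg_eq_arg_sub_pi_iff, sub_im, add_im, sub_re,
    add_re, one_im, one_re, sub_zero, add_zero, Set.mem_Icc] at hz ⊢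
  rcases lt_trichotomy z.im 0 with him | him | him
  · simp [him]
  · grind
  · simp [him, him.ne', him.not_gt]

/-- f restricted to ℂ \ [-1,1] is even. -/
theorem f_even_off_segment (z : ℂ)
    (hz : ¬ (z.im = 0 ∧ z.re ∈ Set.Icc (-1 : ℝ) 1)) :
    f (-z) = f z := by
  have hden : csqrt (-z + 1) * csqrt (-z - 1) = -(csqrt (z + 1) * csqrt (z - 1)) := by
    rw [show -z + 1 = -(z - 1) by ring, show -z - 1 = -(z + 1) by ring,
      csqrt_neg_mul_csqrt_neg (arg_neg_sub_one_add_one_of_notMem_segment hz), mul_comm]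
  rw [f, f, hden, neg_div_neg_eq]
end

section
/- For every z ∈ ℂ with z ∉ [-1,1] (the closed real segment from -1 to 1), the real part of z/(√(z+1)·√(z-1)) is strictly positive. -/
/-! With `a = √(z+1)` and `b = √(z-1)` we have `2z = a² + b²`, and
`Re((a² + b²) / (ab)) = (|a|² + |b|²) Re(a b̄) / |ab|²`. The principal root halves arguments, so
`Re(a b̄) = |ab| cos((arg(z+1) - arg(z-1)) / 2)`; off `[-1,1]` the points `z ± 1` lie in the same
open half-plane or on the same real half-line, so their arguments differ by less than `π`. -/

open Complex ComplexConjugate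
open scoped Real

lemma csqrt_sq (w : ℂ) : csqrt w ^ 2 = w := by
  rw [csqrt, one_div]
  exact_mod_cast cpow_nat_inv_pow w two_ne_zero

lemma csqrt_eq_exp {w : ℂ} (hw : w ≠ 0) : csqrt w = exp (log w / 2) := by
  rw [csqrt, cpow_def_of_ne_zero hw, mul_one_div]

lemma re_csqrt_mul_conj_csqrt_pos {u v : ℂ} (hu : u ≠ 0) (hv : v ≠ 0)
    (harg : |u.arg - v.arg| < π) : 0 < (csqrt u * conj (csqrt v)).re := by
  rw [csqrt_eq_exp hu, csqrt_eq_exp hv, ← exp_conj, ← exp_add, exp_re]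
  have him : (log u / 2 + conj (log v / 2)).im = (u.arg - v.arg) / 2 := by
    simp only [add_im, conj_im, div_ofNat_im, log_im]
    ring
  obtain ⟨hlo, hhi⟩ := abs_lt.mp harg
  rw [him]
  exact mul_pos (Real.exp_pos _) (Real.cos_pos_of_mem_Ioo ⟨by linarith, by linarith⟩)

lemma abs_arg_sub_arg_lt_pi {u v : ℂ} (him : u.im = v.im) (h : u.im ≠ 0 ∨ 0 < u.re * v.re) :
    |u.arg - v.arg| < π := by
  rcases lt_trichotomy u.im 0 with hneg | hzero | hpos
  · have := arg_neg_iff.mpr hneg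
    have := arg_neg_iff.mpr (him ▸ hneg)
    have := neg_pi_lt_arg u
    have := neg_pi_lt_arg v
    exact abs_sub_lt_iff.mpr ⟨by linarith, by linarith⟩
  · have hv : v.im = 0 := him ▸ hzero
    rcases pos_and_pos_or_neg_and_neg_of_mul_pos (h.resolve_left (not_not.mpr hzero)) with
      ⟨hu', hv'⟩ | ⟨hu', hv'⟩
    · rw [arg_eq_zero_iff.mpr ⟨hu'.le, hzero⟩, arg_eq_zero_iff.mpr ⟨hv'.le, hv⟩]
      simpa using Real.pi_pos
    · rw [arg_eq_pi_iff.mpr ⟨hu', hzero⟩, arg_eq_pi_iff.mpr ⟨hv', hv⟩]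
      simpa using Real.pi_pos
  · have := arg_nonneg_iff.mpr hpos.le
    have := arg_nonneg_iff.mpr (him ▸ hpos).le
    have := arg_lt_pi_iff.mpr (Or.inr hpos.ne')
    have := arg_lt_pi_iff.mpr (Or.inr (him ▸ hpos).ne')
    exact abs_sub_lt_iff.mpr ⟨by linarith, by linarith⟩

lemma re_sq_add_sq_div_mul_pos {a b : ℂ} (h : 0 < (a * conj b).re) :
    0 < ((a ^ 2 + b ^ 2) / (a * b)).re := by
  have ha : a ≠ 0 := by rintro rfl; simp at h
  have hb : b ≠ 0 := by rintro rfl; simp at h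
  have hnum : (a ^ 2 + b ^ 2).re * (a * b).re + (a ^ 2 + b ^ 2).im * (a * b).im
      = (normSq a + normSq b) * (a * conj b).re := by
    simp only [add_re, add_im, mul_re, mul_im, conj_re, conj_im, normSq_apply, sq]
    ring
  rw [div_re, ← add_div, hnum]
  have hnorm : 0 < normSq a + normSq b :=
    add_pos_of_pos_of_nonneg (normSq_pos.mpr ha) (normSq_nonneg b)
  exact div_pos (mul_pos hnorm h) (normSq_pos.mpr (mul_ne_zero ha hb))

theorem re_f_pos (z : ℂ)
    (hz : ¬ (z.im = 0 ∧ z.re ∈ Set.Icc (-1 : ℝ) 1)) :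
    0 < (f z).re := by
  have hsep : (z + 1).im ≠ 0 ∨ 0 < (z + 1).re * (z - 1).re := by
    by_cases him : z.im = 0
    · right
      have : ¬ (-1 ≤ z.re ∧ z.re ≤ 1) := fun h => hz ⟨him, h⟩
      rw [not_and_or, not_le, not_le] at this
      simp only [add_re, sub_re, one_re]
      rcases this with h | h <;> nlinarith
    · left
      simpa using him
  have hz₁ : z + 1 ≠ 0 := by rintro h; simp [h] at hsep
  have hz₂ : z - 1 ≠ 0 := by rintro h; rw [sub_eq_zero] at h; subst h; norm_num at hsep
  have hf : f z =
      ((csqrt (z + 1) ^ 2 + csqrt (z - 1) ^ 2) / (csqrt (z + 1) * csqrt (z - 1))) / 2 := by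
    rw [csqrt_sq, csqrt_sq, f]; ring
  rw [hf, div_ofNat_re]
  have := re_sq_add_sq_div_mul_pos (re_csqrt_mul_conj_csqrt_pos hz₁ hz₂
    (abs_arg_sub_arg_lt_pi (by simp) hsep))
  positivity
end

section
/- For real t = √(√5 − 2) > 0, one has x(t)² = 1 where x(t)² := [ (1+t²)·√(4+t²) + 3t + t³ ] / (2t(4+t²)); i.e., the curve crosses the vertical line Re w = 1 at t = √(√5 − 2). -/
/-! At `t = √(√5 - 2)` one has `t² (4 + t²) = (√5 - 2)(√5 + 2) = 1`, so `√(4 + t²) = 1/t`.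
Substituting this, the quotient collapses to `(t⁴ + 4t² + 1) / 2`, which is `1`. -/

open Real

lemma sqrt_four_add_sq_eq_inv {t : ℝ} (ht : 0 < t) (h : t ^ 2 * (4 + t ^ 2) = 1) :
    √(4 + t ^ 2) = t⁻¹ := by
  rw [sqrt_eq_iff_mul_self_eq_of_pos (inv_pos.2 ht)]
  field_simp
  linarith

lemma crossing_quotient_eq_one {t : ℝ} (ht : 0 < t) (h : t ^ 2 * (4 + t ^ 2) = 1) :
    ((1 + t ^ 2) * √(4 + t ^ 2) + 3 * t + t ^ 3) / (2 * t * (4 + t ^ 2)) = 1 := by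
  rw [sqrt_four_add_sq_eq_inv ht h, div_eq_one_iff_eq (by positivity)]
  field_simp
  linear_combination -h

lemma sq_sqrt_sqrt_five_sub_two_mul :
    √(√5 - 2) ^ 2 * (4 + √(√5 - 2) ^ 2) = 1 := by
  have h5 : √5 ^ 2 = 5 := sq_sqrt (by norm_num)
  have h2 : 2 ≤ √5 := (le_sqrt zero_le_two (by norm_num)).2 (by norm_num)
  rw [sq_sqrt (by linarith)]
  linear_combination h5

theorem crossing_point :
    let t : ℝ := Real.sqrt (Real.sqrt 5 - 2)
    ((1 + t ^ 2) * Real.sqrt (4 + t ^ 2) + 3 * t + t ^ 3) / (2 * t * (4 + t ^ 2)) = 1 := by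
  have ht : 0 < √(√5 - 2) := sqrt_pos.2 <| sub_pos.2 <| (lt_sqrt zero_le_two).2 (by norm_num)
  exact crossing_quotient_eq_one ht sq_sqrt_sqrt_five_sub_two_mul
end
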